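/- arXiv:quant-ph/0311036 — 3 statements merged into one kernel-verified Lean document; each statement's English description precedes it below -/
import Mathlib

section
/- Let N = 2^n, M < N, and let f be a Boolean function on {0,…,N−1} with mean a = (1/N)Σ f(i). Define θ = arcsin√a, σ = Mθ/π, and the output probabilities p(j) = (sin²(Mθ)/(2M²))·(sin^{−2}(π(j−σ)/M) + sin^{−2}(π(j+σ)/M)) for j = 0,…,M−1 (assume σ ∉ ℤ so these are well-defined). Then the local average error for q = 1 satisfies e₁(f,M) := Σ_{j=0}^{M−1} p(j)·|a − sin²(πj/M)| = (sin²(Mθ)/M²)·Σ_{j=0}^{M−1} |sin(π(j+σ)/M) / sin(π(j−σ)/M)|. -/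
open Real

lemma qs_sin_prod (x y : ℝ) :
    Real.sin (x + y) * Real.sin (x - y) = Real.sin x ^ 2 - Real.sin y ^ 2 := by
  rw [Real.sin_add, Real.sin_sub]
  have hx := Real.sin_sq_add_cos_sq x
  have hy := Real.sin_sq_add_cos_sq y
  linear_combination Real.sin x ^ 2 * hy - Real.sin y ^ 2 * hx

/-- Local average error of the QS algorithm for `q = 1`:
`Σ_j p(j)|a − sin²(πj/M)| = (sin²(Mθ)/M²) Σ_j |sin(π(j+σ)/M)/sin(π(j−σ)/M)|`. -/
theorem qs_local_average_error_q1
    (n M N : ℕ) (hN : N = 2 ^ n) (hMN : M < N) (hM : 1 ≤ M)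
    (f : ℕ → ℕ) (hf : ∀ i < N, f i ≤ 1)
    (a θ σ : ℝ)
    (ha : a = (∑ i ∈ Finset.range N, (f i : ℝ)) / N)
    (hθ : θ = Real.arcsin (Real.sqrt a))
    (hσ : σ = (M / π) * θ)
    (hσZ : ¬ ∃ m : ℤ, σ = m) :
    ∑ j ∈ Finset.range M,
        (Real.sin (M * θ) ^ 2 / (2 * M ^ 2)) *
          (1 / Real.sin (π * ((j : ℝ) - σ) / M) ^ 2 +
            1 / Real.sin (π * ((j : ℝ) + σ) / M) ^ 2) *
          |a - Real.sin (π * j / M) ^ 2| =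
      (Real.sin (M * θ) ^ 2 / M ^ 2) *
        ∑ j ∈ Finset.range M,
          |Real.sin (π * ((j : ℝ) + σ) / M) / Real.sin (π * ((j : ℝ) - σ) / M)| := by
  have hMpos : 0 < M := hM
  have hM0 : (M : ℝ) ≠ 0 := by positivity
  have hπ0 : π ≠ 0 := Real.pi_ne_zero
  have hN0 : 0 < N := lt_of_le_of_lt (Nat.zero_le M) hMN
  -- a ∈ [0,1]
  have ha0 : 0 ≤ a := by
    rw [ha]; positivity
  have ha1 : a ≤ 1 := by
    rw [ha, div_le_one (by exact_mod_cast hN0)]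
    calc ∑ i ∈ Finset.range N, (f i : ℝ) ≤ ∑ i ∈ Finset.range N, 1 := by
          apply Finset.sum_le_sum
          intro i hi
          exact_mod_cast hf i (Finset.mem_range.mp hi)
      _ = N := by simp
  -- a = sin θ ^ 2
  have hsinθ : Real.sin θ ^ 2 = a := by
    rw [hθ, Real.sin_arcsin (by nlinarith [Real.sqrt_nonneg a]) ((by exact Real.sqrt_le_one.mpr ha1)),
      Real.sq_sqrt ha0]
  -- θ = π σ / M
  have hθσ : θ = π * σ / M := by
    rw [hσ]; field_simp
  -- nonvanishing
  have key : ∀ t : ℝ, Real.sin (π * t / M) = 0 → ∃ k : ℤ, t = k * M := by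
    intro t ht
    rw [Real.sin_eq_zero_iff] at ht
    obtain ⟨k, hk⟩ := ht
    refine ⟨k, mul_left_cancel₀ hπ0 ?_⟩
    rw [eq_div_iff hM0] at hk
    linear_combination hk.symm
  have hQ : ∀ j : ℕ, Real.sin (π * ((j : ℝ) - σ) / M) ≠ 0 := by
    intro j h
    obtain ⟨k, hk⟩ := key _ h
    exact hσZ ⟨(j : ℤ) - k * M, by push_cast; linarith⟩
  have hP : ∀ j : ℕ, Real.sin (π * ((j : ℝ) + σ) / M) ≠ 0 := by
    intro j h
    obtain ⟨k, hk⟩ := key _ h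
    exact hσZ ⟨k * M - (j : ℤ), by push_cast; linarith⟩
  set S := Real.sin (M * θ) ^ 2 with hS
  set P : ℕ → ℝ := fun j => Real.sin (π * ((j : ℝ) + σ) / M) with hPdef
  set Q : ℕ → ℝ := fun j => Real.sin (π * ((j : ℝ) - σ) / M) with hQdef
  -- pointwise rewrite of LHS terms
  have hterm : ∀ j ∈ Finset.range M,
      (S / (2 * (M : ℝ) ^ 2)) * (1 / Q j ^ 2 + 1 / P j ^ 2) * |a - Real.sin (π * j / M) ^ 2|
        = S / (2 * (M : ℝ) ^ 2) * (|P j / Q j| + |Q j / P j|) := by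
    intro j _
    have habs : |a - Real.sin (π * j / M) ^ 2| = |P j| * |Q j| := by
      have : a - Real.sin (π * j / M) ^ 2
          = -(P j * Q j) := by
        have h1 := qs_sin_prod (π * σ / M) (π * j / M)
        rw [← hsinθ, hθσ]
        have e1 : π * σ / M + π * j / M = π * ((j : ℝ) + σ) / M := by ring
        have e2 : π * σ / M - π * j / M = -(π * ((j : ℝ) - σ) / M) := by ring
        rw [e1, e2, Real.sin_neg] at h1
        simp only [hPdef, hQdef]
        linarith
      rw [this, abs_neg, abs_mul]
    have hPj : |P j| ≠ 0 := abs_ne_zero.mpr (hP j)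
    have hQj : |Q j| ≠ 0 := abs_ne_zero.mpr (hQ j)
    have e : (1 / Q j ^ 2 + 1 / P j ^ 2) * (|P j| * |Q j|) = |P j / Q j| + |Q j / P j| := by
      rw [abs_div, abs_div, ← sq_abs (Q j), ← sq_abs (P j)]
      set p := |P j| with hp
      set q := |Q j| with hq
      field_simp
    rw [habs, mul_assoc, e]
  rw [Finset.sum_congr rfl hterm]
  -- symmetry: Σ |Q/P| = Σ |P/Q|
  have hinv : ∀ j < M, (M - (M - j) % M) % M = j := by
    intro j hjM
    rcases Nat.eq_zero_or_pos j with rfl | hpos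
    · simp
    · rw [Nat.mod_eq_of_lt (show M - j < M by omega),
        show M - (M - j) = j by omega, Nat.mod_eq_of_lt hjM]
  have hsym : ∑ j ∈ Finset.range M, |Q j / P j| = ∑ j ∈ Finset.range M, |P j / Q j| := by
    apply Finset.sum_nbij' (i := fun j => (M - j) % M) (j := fun j => (M - j) % M)
    · intro j hj
      exact Finset.mem_range.mpr (Nat.mod_lt _ hMpos)
    · intro j hj
      exact Finset.mem_range.mpr (Nat.mod_lt _ hMpos)
    · intro j hj
      exact hinv j (Finset.mem_range.mp hj)
    · intro j hj
      exact hinv j (Finset.mem_range.mp hj)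
    · intro j hj
      have hj' := Finset.mem_range.mp hj
      rcases Nat.eq_zero_or_pos j with h0 | hpos
      · subst h0
        simp only [Nat.sub_zero, Nat.mod_self, hPdef, hQdef, Nat.cast_zero]
        rw [show π * ((0:ℝ) - σ) / M = -(π * ((0:ℝ) + σ) / M) by ring, Real.sin_neg,
          abs_div, abs_div, abs_neg]
      · have hmod : (M - j) % M = M - j := Nat.mod_eq_of_lt (by omega)
        have hcast : (((M - j) % M : ℕ) : ℝ) = (M : ℝ) - j := by
          rw [hmod]; push_cast [Nat.cast_sub (le_of_lt hj')]; ring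
        simp only [hPdef, hQdef, hcast]
        have e1 : π * ((M : ℝ) - j + σ) / M = π - π * ((j : ℝ) - σ) / M := by
          field_simp; ring
        have e2 : π * ((M : ℝ) - j - σ) / M = π - π * ((j : ℝ) + σ) / M := by
          field_simp; ring
        rw [e1, e2, Real.sin_pi_sub, Real.sin_pi_sub]
  rw [Finset.sum_congr rfl (fun j _ => mul_add (S / (2 * (M:ℝ)^2)) _ _),
    Finset.sum_add_distrib, ← Finset.mul_sum, ← Finset.mul_sum, hsym]
  ring
end

section
/- (Worst-average error for q = ∞ with odd M.) Let M be odd and N > M a power of 2. For the constant Boolean function f ≡ 1 on {0,…,N−1}, we have a_f = 1, θ = arcsin(1) = π/2 and σ = M/2 ∉ ℤ; the probability p_f(0) = 1/M² is positive, while the output is sin²(π·0/M) = 0, so max_{j : p_f(j)>0} |a_f − sin²(πj/M)| = 1. -/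
open Real

/-- For odd `M` and the constant function `f ≡ 1` (so `a_f = 1`, `θ = π/2`,
`σ = M/2`), the outcome `j = 0` has probability `p 0 = 1/M² > 0` and output
`sin²(0) = 0`, so the maximal error over outcomes of positive probability is 1. -/
theorem qs_worst_avg_inf_odd
    (M : ℕ) (hM : 1 ≤ M) (hodd : Odd M)
    (p : ℕ → ℝ)
    (hp : ∀ j, p j = (Real.sin ((M : ℝ) * (π / 2)) ^ 2 / (2 * M ^ 2)) *
      (1 / Real.sin (π * ((j : ℝ) - (M : ℝ) / 2) / M) ^ 2 +
        1 / Real.sin (π * ((j : ℝ) + (M : ℝ) / 2) / M) ^ 2)) :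
    p 0 = 1 / M ^ 2 ∧
    IsGreatest {e : ℝ | ∃ j < M, 0 < p j ∧
      e = |1 - Real.sin (π * (j : ℝ) / M) ^ 2|} 1 := by
  have hM0 : (M : ℝ) ≠ 0 := by
    exact_mod_cast Nat.one_le_iff_ne_zero.mp hM
  obtain ⟨k, hk⟩ := hodd
  have hsin : Real.sin ((M : ℝ) * (π / 2)) ^ 2 = 1 := by
    have harg : (M : ℝ) * (π / 2) = k * π + π / 2 := by
      have : (M : ℝ) = 2 * k + 1 := by exact_mod_cast hk
      rw [this]; ring
    rw [harg, Real.sin_add, Real.sin_pi_div_two, Real.cos_pi_div_two]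
    have h1 : Real.sin ((k : ℝ) * π) = 0 := Real.sin_nat_mul_pi k
    have h2 : Real.cos ((k : ℝ) * π) ^ 2 = 1 := by
      have := Real.sin_sq_add_cos_sq ((k : ℝ) * π)
      rw [h1] at this; nlinarith
    nlinarith
  have harg1 : π * ((0 : ℝ) - (M : ℝ) / 2) / M = -(π / 2) := by
    field_simp; ring
  have harg2 : π * ((0 : ℝ) + (M : ℝ) / 2) / M = π / 2 := by
    field_simp; ring
  have hp0 : p 0 = 1 / M ^ 2 := by
    have := hp 0
    push_cast at this
    rw [harg1, harg2, Real.sin_neg, Real.sin_pi_div_two, hsin] at this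
    rw [this]; field_simp; ring
  refine ⟨hp0, ⟨0, hM, ?_, ?_⟩, ?_⟩
  · rw [hp0]
    positivity
  · norm_num
  · rintro e ⟨j, hj, hpj, rfl⟩
    have h1 := Real.sin_sq_le_one (π * (j : ℝ) / M)
    have h2 := sq_nonneg (Real.sin (π * (j : ℝ) / M))
    rw [abs_le]; constructor <;> linarith
end

section
/- Let F : 𝒜 → [0,1] be the (discrete) distribution function of a probability mass function ρ on a finite set 𝒜 ⊂ ℝ, i.e. F(α) = Σ_{α' ∈ 𝒜, α' < α} ρ(α'). Then for each n ∈ ℕ, the function ρ_n(α) = (2n+1)·binom(2n, n)·∫_{F(α)}^{F(α)+ρ(α)} tⁿ(1−t)ⁿ dt defines a probability mass function on 𝒜, i.e. ρ_n(α) ≥ 0 for all α and Σ_{α ∈ 𝒜} ρ_n(α) = 1. -/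
open Real intervalIntegral Nat

lemma fac_prod (n : ℕ) : ∀ k, n ! * ∏ j ∈ Finset.range k, (n + 1 + j) = (n + k)!
  | 0 => by simp
  | k + 1 => by
      rw [Finset.prod_range_succ, ← mul_assoc, fac_prod n k,
        show n + (k + 1) = (n + k) + 1 from rfl, Nat.factorial_succ]
      ring

lemma beta_nat (n : ℕ) : ∫ t in (0:ℝ)..1, t ^ n * (1 - t) ^ n
    = (n ! : ℝ) * n ! / (2 * n + 1)! := by
  have h := Complex.betaIntegral_eval_nat_add_one_right
    (u := (n : ℂ) + 1) (by simp; positivity) n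
  rw [Complex.betaIntegral] at h
  have heq : ∀ x : ℝ, (x : ℂ) ^ ((n : ℂ) + 1 - 1) * (1 - (x : ℂ)) ^ ((n : ℂ) + 1 - 1)
      = ((x ^ n * (1 - x) ^ n : ℝ) : ℂ) := by
    intro x
    push_cast
    rw [add_sub_cancel_right, Complex.cpow_natCast, Complex.cpow_natCast]
  simp only [heq] at h
  rw [intervalIntegral.integral_ofReal] at h
  have hfac : (n ! : ℂ) ≠ 0 := by exact_mod_cast Nat.factorial_ne_zero n
  have hprod : ∏ j ∈ Finset.range (n + 1), ((n : ℂ) + 1 + (j : ℂ))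
      = ((2 * n + 1)! : ℂ) / (n ! : ℂ) := by
    have hn := fac_prod n (n + 1)
    have : (n ! : ℂ) * ∏ j ∈ Finset.range (n + 1), ((n : ℂ) + 1 + (j : ℂ))
        = ((2 * n + 1)! : ℂ) := by
      rw [show 2 * n + 1 = n + (n + 1) by ring, ← hn]
      push_cast
      ring
    field_simp at this ⊢
    linear_combination this
  rw [hprod] at h
  have h2 : ((∫ t in (0:ℝ)..1, t ^ n * (1 - t) ^ n : ℝ) : ℂ)
      = ((n ! : ℝ) * n ! / (2 * n + 1)! : ℝ) := by
    rw [h]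
    have h2f : ((2 * n + 1)! : ℂ) ≠ 0 := by exact_mod_cast Nat.factorial_ne_zero _
    push_cast
    field_simp
  exact_mod_cast h2

lemma telescope (f : ℝ → ℝ) (hf : Continuous f) (ρ : ℝ → ℝ) (A : Finset ℝ) :
    ∑ α ∈ A, ∫ t in (∑ α' ∈ A.filter (· < α), ρ α')..
        ((∑ α' ∈ A.filter (· < α), ρ α') + ρ α), f t
      = ∫ t in (0:ℝ)..(∑ α ∈ A, ρ α), f t := by
  induction A using Finset.strongInduction with
  | _ A ih =>
    rcases A.eq_empty_or_nonempty with rfl | hne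
    · simp
    · set m := A.max' hne with hm
      have hmA : m ∈ A := A.max'_mem hne
      have hsub : A.erase m ⊂ A := Finset.erase_ssubset hmA
      have key : ∀ α ∈ A.erase m, A.filter (· < α) = (A.erase m).filter (· < α) := by
        intro α hα
        rw [Finset.filter_erase]
        rw [Finset.erase_eq_of_notMem]
        simp only [Finset.mem_filter]
        rintro ⟨-, hlt⟩
        exact absurd hlt (not_lt.2 (A.le_max' α (Finset.mem_of_mem_erase hα)))
      have hfm : A.filter (· < m) = A.erase m := by
        ext x
        simp only [Finset.mem_filter, Finset.mem_erase]
        constructor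
        · rintro ⟨hx, hlt⟩; exact ⟨ne_of_lt hlt, hx⟩
        · rintro ⟨hne', hx⟩; exact ⟨hx, lt_of_le_of_ne (A.le_max' x hx) hne'⟩
      rw [← Finset.sum_erase_add _ _ hmA, Finset.sum_congr rfl
        (fun α hα => by rw [key α hα]), ih _ hsub, hfm,
        ← Finset.sum_erase_add _ ρ hmA]
      exact intervalIntegral.integral_add_adjacent_intervals
        (hf.intervalIntegrable _ _) (hf.intervalIntegrable _ _)

/-- The median-of-`2n+1` output distribution is a probability mass function:
`ρ_n(α) = (2n+1)·C(2n,n)·∫_{F(α)}^{F(α)+ρ(α)} tⁿ(1−t)ⁿ dt` is nonnegative and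
sums to 1 over the finite outcome set. -/
theorem median_distribution_pmf
    (A : Finset ℝ) (ρ : ℝ → ℝ)
    (hρnn : ∀ α ∈ A, 0 ≤ ρ α)
    (hρsum : ∑ α ∈ A, ρ α = 1)
    (n : ℕ) :
    (∀ α ∈ A, 0 ≤ (2 * n + 1) * (Nat.choose (2 * n) n) *
      ∫ t in (∑ α' ∈ A.filter (· < α), ρ α')..
        ((∑ α' ∈ A.filter (· < α), ρ α') + ρ α), t ^ n * (1 - t) ^ n) ∧
    ∑ α ∈ A, (2 * n + 1) * (Nat.choose (2 * n) n) *
      ∫ t in (∑ α' ∈ A.filter (· < α), ρ α')..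
        ((∑ α' ∈ A.filter (· < α), ρ α') + ρ α), t ^ n * (1 - t) ^ n = 1 := by
  have hcont : Continuous fun t : ℝ => t ^ n * (1 - t) ^ n := by continuity
  constructor
  · intro α hα
    have ha0 : 0 ≤ ∑ α' ∈ A.filter (· < α), ρ α' :=
      Finset.sum_nonneg fun x hx => hρnn x (Finset.mem_filter.1 hx).1
    have hb1 : (∑ α' ∈ A.filter (· < α), ρ α') + ρ α ≤ 1 := by
      rw [← hρsum]
      have hsub : insert α (A.filter (· < α)) ⊆ A := by
        intro x hx
        rcases Finset.mem_insert.1 hx with rfl | hx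
        · exact hα
        · exact (Finset.mem_filter.1 hx).1
      calc (∑ α' ∈ A.filter (· < α), ρ α') + ρ α
          = ∑ x ∈ insert α (A.filter (· < α)), ρ x := by
            rw [Finset.sum_insert (by simp), add_comm]
        _ ≤ ∑ α ∈ A, ρ α := Finset.sum_le_sum_of_subset_of_nonneg hsub
            (fun x hx _ => hρnn x hx)
    have hint : 0 ≤ ∫ t in (∑ α' ∈ A.filter (· < α), ρ α')..
        ((∑ α' ∈ A.filter (· < α), ρ α') + ρ α), t ^ n * (1 - t) ^ n := by
      apply intervalIntegral.integral_nonneg (by linarith [hρnn α hα])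
      intro t ht
      have h1 : 0 ≤ t := le_trans ha0 ht.1
      have h2 : t ≤ 1 := le_trans ht.2 hb1
      have : 0 ≤ 1 - t := by linarith
      positivity
    positivity
  · rw [← Finset.mul_sum, telescope _ hcont, hρsum, beta_nat]
    have h1 : (n ! : ℝ) ≠ 0 := by exact_mod_cast Nat.factorial_ne_zero n
    have h2 : ((2 * n + 1)! : ℝ) ≠ 0 := by exact_mod_cast Nat.factorial_ne_zero _
    have hnat : (2 * n).choose n * n ! * n ! = (2 * n)! := by
      have h := Nat.choose_mul_factorial_mul_factorial (show n ≤ 2 * n by omega)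
      simpa [show 2 * n - n = n by omega] using h
    have hch : (n ! : ℝ) * n ! * (Nat.choose (2 * n) n) = (2 * n)! := by
      exact_mod_cast congrArg (Nat.cast : ℕ → ℝ) (by linarith [hnat] : n ! * n ! * (2 * n).choose n = (2 * n)!)
    have hfs : ((2 * n + 1)! : ℝ) = (2 * n + 1) * (2 * n)! := by
      rw [Nat.factorial_succ]; push_cast; ring
    field_simp
    rw [hfs]
    linear_combination ((2:ℝ) * n + 1) * hch
end
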